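/- For polynomial G(p) = Σ_{k=0}^h p^k Γ_k, the shifted block Loewner matrix 𝕃_s satisfies rank(𝕃_s) ≤ Σ_{k=0}^h rank(Γ_k)·rank(Ξ_{k+1}). -/

import Mathlib

/-!
Writing `G p = ∑ₖ pᵏ Γₖ`, each block of `𝕃ₛ` is
`(π G(π) - φ G(φ)) / (π - φ) = ∑ₖ ((π^(k+1) - φ^(k+1)) / (π - φ)) Γₖ`, so `𝕃ₛ` is the sum over `k`
of the Hadamard products of `Ξₖ₊₁` with the block-replicated `Γₖ`. Rank is subadditive; for rank
factorizations `A = P Q`, `B = U V`, the Hadamard product `A ⊙ B` is the product of the row-wise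
Kronecker product of `P, U` with the column-wise one of `Q, V`, whence
`rank (A ⊙ B) ≤ rank A * rank B`; and replicating blocks does not increase the rank.
-/

open Matrix

namespace Matrix

variable {K : Type*} [Field K] {m n : Type*} [Fintype n]

theorem rank_add_le (A B : Matrix m n K) : (A + B).rank ≤ A.rank + B.rank := by
  have hrange : LinearMap.range (A + B).mulVecLin ≤
      LinearMap.range A.mulVecLin ⊔ LinearMap.range B.mulVecLin := by
    rw [mulVecLin_add]
    rintro _ ⟨v, rfl⟩
    exact Submodule.add_mem_sup ⟨v, rfl⟩ ⟨v, rfl⟩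
  exact (Submodule.finrank_mono hrange).trans (Submodule.finrank_add_le_finrank_add_finrank _ _)

theorem rank_sum_le {ι : Type*} (s : Finset ι) (f : ι → Matrix m n K) :
    (∑ k ∈ s, f k).rank ≤ ∑ k ∈ s, (f k).rank :=
  Finset.le_sum_of_subadditive (fun A : Matrix m n K ↦ A.rank) rank_zero.le rank_add_le s f

theorem exists_eq_mul_of_rank (A : Matrix m n K) :
    ∃ (P : Matrix m (Fin A.rank) K) (Q : Matrix (Fin A.rank) n K), A = P * Q := by
  classical
  set f := A.mulVecLin
  let e := (Module.finBasisOfFinrankEq K (LinearMap.range f) (rfl : _ = A.rank)).equivFun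
  refine ⟨LinearMap.toMatrix' ((LinearMap.range f).subtype ∘ₗ e.symm.toLinearMap),
    LinearMap.toMatrix' (e.toLinearMap ∘ₗ f.rangeRestrict), ?_⟩
  have hcomp : ((LinearMap.range f).subtype ∘ₗ e.symm.toLinearMap) ∘ₗ
      (e.toLinearMap ∘ₗ f.rangeRestrict) = f := by
    ext v
    simp
  rw [← LinearMap.toMatrix'_comp, hcomp]
  exact (LinearMap.toMatrix'_toLin' A).symm

theorem rank_hadamard_le [Fintype m] (A B : Matrix m n K) :
    (A ⊙ B).rank ≤ A.rank * B.rank := by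
  obtain ⟨P, Q, hA⟩ := exists_eq_mul_of_rank A
  obtain ⟨U, V, hB⟩ := exists_eq_mul_of_rank B
  have hfac : A ⊙ B = (of fun i (t : Fin A.rank × Fin B.rank) => P i t.1 * U i t.2) *
      of fun (t : Fin A.rank × Fin B.rank) (j : n) => Q t.1 j * V t.2 j := by
    ext i j
    rw [hadamard_apply, congr_fun₂ hA i j, congr_fun₂ hB i j]
    simp only [mul_apply, of_apply, Fintype.sum_prod_type, Finset.sum_mul_sum]
    exact Finset.sum_congr rfl fun _ _ => Finset.sum_congr rfl fun _ _ => by ring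
  calc (A ⊙ B).rank ≤ Fintype.card (Fin A.rank × Fin B.rank) :=
        hfac ▸ (rank_mul_le_left _ _).trans (rank_le_card_width _)
    _ = A.rank * B.rank := by simp

end Matrix

theorem inv_sub_mul_sub_sum_pow_mul_eq {K : Type*} [Field K] {ι : Type*} (s : Finset ι)
    (e : ι → ℕ) (p q : K) (c : ι → K) :
    (p - q)⁻¹ * (p * ∑ k ∈ s, p ^ e k * c k - q * ∑ k ∈ s, q ^ e k * c k) =
      ∑ k ∈ s, (p ^ (e k + 1) - q ^ (e k + 1)) / (p - q) * c k := by
  simp only [Finset.mul_sum, ← Finset.sum_sub_distrib]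
  exact Finset.sum_congr rfl fun _ _ => by ring

theorem polynomial_shifted_loewner_rank_le_general (M N m n h : ℕ)
    (Γ : ℕ → Matrix (Fin m) (Fin n) ℝ) (π : Fin M → ℝ) (φ : Fin N → ℝ)
    (Ls : Matrix (Fin M × Fin m) (Fin N × Fin n) ℝ)
    (Ξ : ℕ → Matrix (Fin M × Fin m) (Fin N × Fin n) ℝ)
    (hLs : ∀ i j a b, Ls (i, a) (j, b) =
      (π i - φ j)⁻¹ * ((π i • (∑ k ∈ Finset.range (h + 1), π i ^ k • Γ k)
        - φ j • ∑ k ∈ Finset.range (h + 1), φ j ^ k • Γ k) a b))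
    (hΞ : ∀ k i j a b, Ξ k (i, a) (j, b) = (π i ^ k - φ j ^ k) / (π i - φ j)) :
    Ls.rank ≤ ∑ k ∈ Finset.range (h + 1), (Γ k).rank * (Ξ (k + 1)).rank := by
  have hsplit :
      Ls = ∑ k ∈ Finset.range (h + 1), Ξ (k + 1) ⊙ (Γ k).submatrix Prod.snd Prod.snd := by
    ext ⟨i, a⟩ ⟨j, b⟩
    simp only [hLs, Matrix.sub_apply, Matrix.smul_apply, Matrix.sum_apply, smul_eq_mul,
      hadamard_apply, submatrix_apply, hΞ, inv_sub_mul_sub_sum_pow_mul_eq]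
  rw [hsplit]
  refine (rank_sum_le _ _).trans (Finset.sum_le_sum fun k _ => ?_)
  calc _ ≤ (Ξ (k + 1)).rank * ((Γ k).submatrix Prod.snd Prod.snd).rank := rank_hadamard_le _ _
    _ ≤ (Ξ (k + 1)).rank * (Γ k).rank := Nat.mul_le_mul_left _ (rank_submatrix_le _ _ _)
    _ = (Γ k).rank * (Ξ (k + 1)).rank := mul_comm _ _

/-- For polynomial `G p = ∑_{k=0}^h p^k • Γ k`, the shifted block Loewner matrix `𝕃ₛ`
satisfies `rank 𝕃ₛ ≤ ∑_{k=0}^h rank (Γ k) * rank (Ξ (k+1))`, where `Ξ k` has `(i,j)`-th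
block `((π i ^ k - φ j ^ k) / (π i - φ j)) • 𝟙_{m,n}`. -/
theorem polynomial_shifted_loewner_rank_le (M N m n h : ℕ)
    (Γ : ℕ → Matrix (Fin m) (Fin n) ℝ) (π : Fin M → ℝ) (φ : Fin N → ℝ)
    (hπφ : ∀ i j, π i ≠ φ j)
    (Ls : Matrix (Fin M × Fin m) (Fin N × Fin n) ℝ)
    (Ξ : ℕ → Matrix (Fin M × Fin m) (Fin N × Fin n) ℝ)
    (hLs : ∀ i j a b, Ls (i, a) (j, b) =
      (π i - φ j)⁻¹ * ((π i • (∑ k ∈ Finset.range (h + 1), π i ^ k • Γ k)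
        - φ j • ∑ k ∈ Finset.range (h + 1), φ j ^ k • Γ k) a b))
    (hΞ : ∀ k i j a b, Ξ k (i, a) (j, b) = (π i ^ k - φ j ^ k) / (π i - φ j)) :
    Ls.rank ≤ ∑ k ∈ Finset.range (h + 1), (Γ k).rank * (Ξ (k + 1)).rank :=
  polynomial_shifted_loewner_rank_le_general M N m n h Γ π φ Ls Ξ hLs hΞ
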